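/- For all positive integers m and d, let k = d·2^m and let f : {-1,1}^{mk} → {0,1} be the AND of k OR-functions on disjoint blocks of m bits (f_i(x) = 1 unless all m bits of block i are a fixed pattern). Then W_{1,d}[f] = ∑_{|S|=d} |f̂(S)| ≥ (m/e^{3/2})^d. -/

import Mathlib

/-!
The absolute Fourier coefficients of an AND of ORs on disjoint blocks factor over the blocks:
`|f̂(S)| = ∏ᵢ w(Sᵢ)` with `w(∅) = 1 - 2⁻ᵐ` and `w(T) = 2⁻ᵐ` for `T ≠ ∅`. Split the `k = d·2ᵐ`
blocks into `d` groups of `2ᵐ` blocks. Choosing, in every group, one block and one coordinate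
of that block gives `(2ᵐ·m)ᵈ` distinct sets `S` of size `d`, each with
`|f̂(S)| = (2⁻ᵐ (1 - 2⁻ᵐ)^(2ᵐ-1))ᵈ ≥ (2⁻ᵐ/e)ᵈ`, so `W_{1,d}[f] ≥ (m/e)ᵈ`.
-/

open Finset

/-- The sign of a Boolean bit, as a real number in `{-1, 1}`. -/
noncomputable def sgn (b : Bool) : ℝ := if b then 1 else -1

/-- Fourier coefficient of a function on `{-1,1}^{mk}` (viewed as `k` blocks of `m` bits)
at the set of coordinates `S = (S_1, …, S_k)`, over the uniform distribution. -/
noncomputable def fhatP {k m : ℕ} (f : (Fin k → Fin m → Bool) → ℝ)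
    (S : Fin k → Finset (Fin m)) : ℝ :=
  (∑ x : Fin k → Fin m → Bool, f x * ∏ i, ∏ j ∈ S i, sgn (x i j)) / 2 ^ (m * k)

/-- Level-`d` Fourier weight in `L₁`-norm of a function on `k` blocks of `m` bits. -/
noncomputable def W1P {k m : ℕ} (f : (Fin k → Fin m → Bool) → ℝ) (d : ℕ) : ℝ :=
  ∑ S ∈ Finset.univ.filter (fun S : Fin k → Finset (Fin m) => ∑ i, (S i).card = d),
    |fhatP f S|

lemma abs_sgn (b : Bool) : |sgn b| = 1 := by
  cases b <;> simp [sgn]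

lemma sum_prod_sgn {ι : Type*} [Fintype ι] [DecidableEq ι] (T : Finset ι) :
    ∑ y : ι → Bool, ∏ j ∈ T, sgn (y j) = if T = ∅ then (2 : ℝ) ^ Fintype.card ι else 0 := by
  have hfactor (j : ι) :
      ∑ b : Bool, (if j ∈ T then sgn b else 1) = if j ∈ T then (0 : ℝ) else 2 := by
    split_ifs <;> norm_num [sgn]
  simp_rw [← Fintype.prod_ite_mem T]
  rw [← Fintype.prod_sum (fun j b => if j ∈ T then sgn b else 1)]
  simp_rw [hfactor]
  split_ifs with hT
  · simp [hT]
  · obtain ⟨j, hj⟩ := nonempty_iff_ne_empty.2 hT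
    exact prod_eq_zero (mem_univ j) (if_pos hj)

noncomputable def blockCoeff {m : ℕ} (g : (Fin m → Bool) → ℝ) (T : Finset (Fin m)) : ℝ :=
  (∑ y : Fin m → Bool, g y * ∏ j ∈ T, sgn (y j)) / 2 ^ m

lemma fhatP_prod_blocks {k m : ℕ} (g : Fin k → (Fin m → Bool) → ℝ)
    (S : Fin k → Finset (Fin m)) :
    fhatP (fun x => ∏ i, g i (x i)) S = ∏ i, blockCoeff (g i) (S i) := by
  simp only [fhatP, blockCoeff, prod_div_distrib, prod_const, card_univ, Fintype.card_fin,
    ← pow_mul, Fintype.prod_sum, ← prod_mul_distrib]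

lemma blockCoeff_or {m : ℕ} (p : Fin m → Bool) (T : Finset (Fin m)) :
    blockCoeff (fun y => if y = p then 0 else 1) T
      = (if T = ∅ then 1 else 0) - (∏ j ∈ T, sgn (p j)) / 2 ^ m := by
  have hsplit (y : Fin m → Bool) : (if y = p then (0 : ℝ) else 1) * ∏ j ∈ T, sgn (y j)
      = ∏ j ∈ T, sgn (y j) - if y = p then ∏ j ∈ T, sgn (y j) else 0 := by
    split_ifs <;> simp
  simp only [blockCoeff, hsplit, sum_sub_distrib, sum_prod_sgn, sum_ite_eq', mem_univ, if_true,
    Fintype.card_fin]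
  rw [sub_div]
  split_ifs <;> simp

noncomputable def orWeight (m : ℕ) (T : Finset (Fin m)) : ℝ :=
  if T = ∅ then 1 - (2 ^ m)⁻¹ else (2 ^ m)⁻¹

lemma abs_blockCoeff_or {m : ℕ} (p : Fin m → Bool) (T : Finset (Fin m)) :
    |blockCoeff (fun y => if y = p then 0 else 1) T| = orWeight m T := by
  rw [blockCoeff_or, orWeight]
  split_ifs with hT
  · subst hT
    have hinv : ((2 : ℝ) ^ m)⁻¹ ≤ 1 := inv_le_one_of_one_le₀ (one_le_pow₀ one_le_two)
    rw [prod_empty, one_div, abs_of_nonneg (sub_nonneg.2 hinv)]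
  · simp [abs_div, abs_prod, abs_sgn]

lemma abs_fhatP_and_or {k m : ℕ} (p : Fin k → Fin m → Bool) (S : Fin k → Finset (Fin m)) :
    |fhatP (fun x => ∏ i, if x i = p i then (0 : ℝ) else 1) S| = ∏ i, orWeight m (S i) := by
  rw [fhatP_prod_blocks (fun i y => if y = p i then 0 else 1), abs_prod]
  simp_rw [abs_blockCoeff_or]

section SingletonConfig

variable {κ β γ : Type*} [DecidableEq β]

def singletonConfig (a : κ → β × γ) (q : κ × β) : Finset γ :=
  if (a q.1).1 = q.2 then {(a q.1).2} else ∅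

lemma singletonConfig_injective :
    Function.Injective (singletonConfig : (κ → β × γ) → κ × β → Finset γ) := by
  intro a a' h
  funext t
  have ht := congrFun h (t, (a t).1)
  simp only [singletonConfig, if_true] at ht
  split_ifs at ht with hc
  · exact Prod.ext hc.symm (singleton_injective ht)
  · exact absurd ht (singleton_ne_empty _)

variable [Fintype κ] [Fintype β]

lemma sum_card_singletonConfig (a : κ → β × γ) :
    ∑ q, (singletonConfig a q).card = Fintype.card κ := by
  simp only [singletonConfig, apply_ite card, card_singleton, card_empty]
  rw [Fintype.sum_prod_type]
  simp

lemma prod_singletonConfig {M : Type*} [CommMonoid M] (w : Finset γ → M) (a : κ → β × γ) :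
    ∏ q, w (singletonConfig a q) = ∏ t, w {(a t).2} * w ∅ ^ (Fintype.card β - 1) := by
  rw [Fintype.prod_prod_type]
  refine prod_congr rfl fun t _ => ?_
  have hoff : ∀ b ∈ ({(a t).1} : Finset β)ᶜ, w (singletonConfig a (t, b)) = w ∅ := fun b hb =>
    congrArg w (if_neg (Ne.symm (by simpa using hb)))
  rw [Fintype.prod_eq_mul_prod_compl (a t).1, prod_congr rfl hoff, prod_const, card_compl,
    card_singleton, singletonConfig, if_pos rfl]

end SingletonConfig

lemma abs_fhatP_and_or_singletonConfig {k d n m : ℕ} (p : Fin k → Fin m → Bool)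
    (e : Fin k ≃ Fin d × Fin n) (a : Fin d → Fin n × Fin m) :
    |fhatP (fun x => ∏ i, if x i = p i then (0 : ℝ) else 1) (singletonConfig a ∘ e)|
      = ((2 ^ m)⁻¹ * (1 - (2 ^ m)⁻¹) ^ (n - 1)) ^ d := by
  rw [abs_fhatP_and_or]
  refine (e.prod_comp fun q => orWeight m (singletonConfig a q)).trans ?_
  rw [prod_singletonConfig]
  simp [orWeight]

lemma sum_le_W1P_of_injective {k m d : ℕ} {α : Type*} [Fintype α]
    (f : (Fin k → Fin m → Bool) → ℝ) (c : α → Fin k → Finset (Fin m))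
    (hc : Function.Injective c) (hlevel : ∀ a, ∑ i, (c a i).card = d) :
    ∑ a, |fhatP f (c a)| ≤ W1P f d := by
  rw [W1P, ← sum_image (f := fun S => |fhatP f S|) hc.injOn]
  refine sum_le_sum_of_subset_of_nonneg ?_ fun _ _ _ => abs_nonneg _
  intro S hS
  obtain ⟨a, -, rfl⟩ := mem_image.1 hS
  simp [hlevel]

lemma exp_neg_one_le_one_sub_inv_pow (n : ℕ) :
    Real.exp (-1) ≤ (1 - (n : ℝ)⁻¹) ^ (n - 1) := by
  have hpow : ∀ j : ℕ, (1 - ((j + 1 : ℕ) : ℝ)⁻¹) ^ j = ((1 + (j : ℝ)⁻¹) ^ j)⁻¹ := by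
    rintro (_ | j)
    · simp
    · rw [← inv_pow]; congr 1; push_cast; field_simp; ring
  rcases n with _ | j
  · simp [Real.exp_le_one_iff]
  · rw [Nat.add_sub_cancel, hpow, Real.exp_neg]
    exact inv_anti₀ (by positivity) Real.one_add_inv_pow_le_exp

theorem stmt9_general (m d : ℕ) (k : ℕ) (hk : k = d * 2 ^ m)
    (p : Fin k → Fin m → Bool) :
    ((m : ℝ) / Real.exp (3 / 2)) ^ d
      ≤ W1P (fun x : Fin k → Fin m → Bool =>
          ∏ i, (if x i = p i then (0 : ℝ) else 1)) d := by
  subst hk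
  let e : Fin (d * 2 ^ m) ≃ Fin d × Fin (2 ^ m) := finProdFinEquiv.symm
  have hconfigs := sum_le_W1P_of_injective
    (fun x : Fin (d * 2 ^ m) → Fin m → Bool => ∏ i, if x i = p i then (0 : ℝ) else 1)
    (fun a : Fin d → Fin (2 ^ m) × Fin m => singletonConfig a ∘ e)
    (e.surjective.injective_comp_right.comp singletonConfig_injective)
    fun a => (e.sum_comp fun q => (singletonConfig a q).card).trans
      ((sum_card_singletonConfig a).trans (Fintype.card_fin d))
  simp only [abs_fhatP_and_or_singletonConfig, sum_const, card_univ, Fintype.card_fun,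
    Fintype.card_prod, Fintype.card_fin, nsmul_eq_mul] at hconfigs
  refine le_trans ?_ hconfigs
  rw [Nat.cast_pow, ← mul_pow]
  gcongr
  calc (m : ℝ) / Real.exp (3 / 2) ≤ m * Real.exp (-1) := by
        rw [div_eq_mul_inv, ← Real.exp_neg]
        gcongr
        norm_num
    _ ≤ m * (1 - (2 ^ m)⁻¹) ^ (2 ^ m - 1) := by
        gcongr
        simpa using exp_neg_one_le_one_sub_inv_pow (2 ^ m)
    _ = _ := by
        push_cast
        field_simp

/-- For `k = d·2^m`, the AND of `k` OR-functions on disjoint blocks of `m` bits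
(the `i`-th function is `1` unless block `i` equals the fixed pattern `p i`)
has level-`d` Fourier weight at least `(m/e^{3/2})^d`. -/
theorem stmt9 (m d : ℕ) (hm : 0 < m) (hd : 0 < d) (k : ℕ) (hk : k = d * 2 ^ m)
    (p : Fin k → Fin m → Bool) :
    ((m : ℝ) / Real.exp (3 / 2)) ^ d
      ≤ W1P (fun x : Fin k → Fin m → Bool =>
          ∏ i, (if x i = p i then (0 : ℝ) else 1)) d :=
  stmt9_general m d k hk p
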